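/- Let p be a prime and let H be a group with an abelian normal subgroup T that is isomorphic as a group to a product of r copies of the circle group {z ∈ ℂ : |z| = 1}, where r ≥ 1, and such that the quotient H/T is a finite group of p-power order. Then there exists g ∈ T with the following properties: g has order exactly p, g lies in the center of H, and g is a p-th power in T (there exists x ∈ T with x^p = g). In particular, g lies in the kernel of every homomorphism from H to an elementary abelian p-group. -/

import Mathlib

/-!
The elements of `T` killed by `p` form a finite normal subgroup `Ω` of `H` whose order is divisible
by `p` (it is `p ^ r`). Since `T` is abelian, conjugation by `H` on `Ω` factors through the
`p`-group `H ⧸ T`, so the number of fixed points is `≡ |Ω| ≡ 0 (mod p)`. Besides `1` there is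
thus another fixed point `g`, i.e. a central element of order `p`. As `T` is divisible,
`g = x ^ p` with `x ∈ T`, so `g` dies in every elementary abelian `p`-group.
-/

namespace Circle

lemma exists_pow_eq {n : ℕ} (hn : n ≠ 0) (z : Circle) : ∃ x : Circle, x ^ n = z :=
  ⟨exp (Complex.arg z / n), by
    rw [← exp_nsmul, nsmul_eq_mul, mul_div_cancel₀ _ (by exact_mod_cast hn), exp_arg]⟩

lemma finite_setOf_pow_eq_one {n : ℕ} (hn : n ≠ 0) : {z : Circle | z ^ n = 1}.Finite := by
  refine ((Polynomial.nthRootsFinset n (1 : ℂ)).finite_toSet.preimage coe_injective.injOn).subset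
    fun (z : Circle) (hz : z ^ n = 1) => by
      show (z : ℂ) ∈ Polynomial.nthRootsFinset n (1 : ℂ)
      rw [Polynomial.mem_nthRootsFinset (Nat.pos_of_ne_zero hn), ← coe_pow, hz, coe_one]

lemma exists_pow_eq_one_ne_one {n : ℕ} (hn : 1 < n) : ∃ z : Circle, z ^ n = 1 ∧ z ≠ 1 :=
  have : NeZero n := ⟨by omega⟩
  let ⟨ζ, hζ⟩ := HasEnoughRootsOfUnity.exists_primitiveRoot Circle n
  ⟨ζ, hζ.pow_eq_one, hζ.ne_one hn⟩

end Circle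

namespace Pi

variable {ι M : Type*} [Monoid M] {n : ℕ}

lemma exists_pow_eq (hM : ∀ a : M, ∃ x, x ^ n = a) (v : ι → M) : ∃ w : ι → M, w ^ n = v := by
  choose w hw using fun i => hM (v i)
  exact ⟨w, funext hw⟩

lemma finite_setOf_pow_eq_one [Finite ι] (hM : {a : M | a ^ n = 1}.Finite) :
    {v : ι → M | v ^ n = 1}.Finite := by
  convert Set.Finite.pi (t := fun _ : ι => {a : M | a ^ n = 1}) fun _ => hM using 1
  ext v
  simp [funext_iff]

end Pi

namespace Subgroup

variable {H : Type*} [Group H]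

theorem exists_ne_one_mem_center_of_dvd_card {p : ℕ} [Fact p.Prime]
    {N T : Subgroup H} [N.Normal] [T.Normal] [Finite N] (hTN : T ≤ centralizer N)
    (hHT : IsPGroup p (H ⧸ T)) (hpN : p ∣ Nat.card N) :
    ∃ g ∈ N, g ≠ 1 ∧ g ∈ center H := by
  have hker : T ≤ (MulAut.conjNormal : H →* MulAut N).ker := fun t ht => by
    ext g
    simpa [MulAut.conjNormal_apply, mul_inv_eq_iff_eq_mul] using
      (mem_centralizer_iff.mp (hTN ht) g g.2).symm
  let : MulAction (H ⧸ T) N := MulAction.compHom N (QuotientGroup.lift T MulAut.conjNormal hker)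
  obtain ⟨g, hg, hg1⟩ := hHT.exists_fixed_point_of_prime_dvd_card_of_fixed_point N hpN
    (a := 1) fun q => map_one (QuotientGroup.lift T MulAut.conjNormal hker q)
  refine ⟨g, g.2, fun h => hg1 (Subtype.ext h.symm), mem_center_iff.mpr fun h => ?_⟩
  have hconj : h * g * h⁻¹ = g := congrArg Subtype.val (hg (h : H ⧸ T))
  exact mul_inv_eq_iff_eq_mul.mp hconj

def torsionBy (T : Subgroup H) (hT : ∀ a ∈ T, ∀ b ∈ T, Commute a b) (n : ℕ) : Subgroup H where
  carrier := {g | g ∈ T ∧ g ^ n = 1}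
  one_mem' := ⟨T.one_mem, one_pow n⟩
  mul_mem' ha hb := ⟨T.mul_mem ha.1 hb.1, by rw [(hT _ ha.1 _ hb.1).mul_pow, ha.2, hb.2, one_mul]⟩
  inv_mem' ha := ⟨T.inv_mem ha.1, by rw [inv_pow, ha.2, inv_one]⟩

variable {T : Subgroup H} {hT : ∀ a ∈ T, ∀ b ∈ T, Commute a b} {n : ℕ}

instance [T.Normal] : (T.torsionBy hT n).Normal where
  conj_mem g hg h := ⟨Normal.conj_mem ‹_› g hg.1 h, by rw [conj_pow, hg.2, mul_one, mul_inv_cancel]⟩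

lemma le_centralizer_torsionBy : T ≤ centralizer (T.torsionBy hT n) :=
  fun t ht => mem_centralizer_iff.mpr fun g hg => hT g hg.1 t ht

lemma finite_torsionBy_of_mulEquiv {A : Type*} [Group A] (e : T ≃* A)
    (hA : {a : A | a ^ n = 1}.Finite) : Finite (T.torsionBy hT n) :=
  have := hA.to_subtype
  Finite.of_injective (fun g : T.torsionBy hT n => (⟨e ⟨g, g.2.1⟩, by
      rw [Set.mem_ofPred_eq, ← map_pow, show (⟨g, g.2.1⟩ : T) ^ n = 1 from Subtype.ext g.2.2,
        map_one]⟩ : {a : A | a ^ n = 1}))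
    fun _ _ hgh =>
      Subtype.ext <| congrArg (Subtype.val : T → H) (e.injective (Subtype.ext_iff.mp hgh))

lemma exists_mem_pow_eq_one_ne_one_of_mulEquiv {A : Type*} [Group A] (e : T ≃* A) {a : A}
    (ha : a ^ n = 1) (ha1 : a ≠ 1) : ∃ t ∈ T, t ^ n = 1 ∧ t ≠ 1 :=
  ⟨e.symm a, (e.symm a).2, by rw [← coe_pow, ← map_pow, ha, map_one, coe_one], by simpa using ha1⟩

lemma exists_mem_pow_eq_of_mulEquiv {A : Type*} [Group A] (e : T ≃* A)
    (hA : ∀ a : A, ∃ x, x ^ n = a) {t : H} (ht : t ∈ T) : ∃ x ∈ T, x ^ n = t :=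
  let ⟨x, hx⟩ := hA (e ⟨t, ht⟩)
  ⟨e.symm x, (e.symm x).2, by rw [← coe_pow, ← map_pow, hx, e.symm_apply_apply]⟩

theorem exists_orderOf_eq_mem_center_of_divisible {p : ℕ} [Fact p.Prime]
    (T : Subgroup H) [T.Normal] (hT : ∀ a ∈ T, ∀ b ∈ T, Commute a b)
    [Finite (T.torsionBy hT p)] (hHT : IsPGroup p (H ⧸ T))
    (htors : ∃ t ∈ T, t ^ p = 1 ∧ t ≠ 1) (hdiv : ∀ t ∈ T, ∃ x ∈ T, x ^ p = t) :
    ∃ g ∈ T, orderOf g = p ∧ g ∈ center H ∧ ∃ x ∈ T, x ^ p = g := by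
  obtain ⟨t, htT, htp, ht1⟩ := htors
  have hpdvd : p ∣ Nat.card (T.torsionBy hT p) := by
    have hord : orderOf (⟨t, htT, htp⟩ : T.torsionBy hT p) = p :=
      orderOf_eq_prime (Subtype.ext htp) fun h => ht1 (congrArg Subtype.val h)
    simpa only [hord] using _root_.orderOf_dvd_natCard (⟨t, htT, htp⟩ : T.torsionBy hT p)
  obtain ⟨g, ⟨hgT, hgp⟩, hg1, hgZ⟩ :=
    exists_ne_one_mem_center_of_dvd_card le_centralizer_torsionBy hHT hpdvd
  exact ⟨g, hgT, orderOf_eq_prime hgp hg1, hgZ, hdiv g hgT⟩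

end Subgroup

/-- If `H` is a group with an abelian normal subgroup `T` isomorphic
to a product of `r ≥ 1` copies of the circle group such that `H/T` is a finite
`p`-group, then there is an element `g ∈ T` of order exactly `p` which is central
in `H` and is a `p`-th power in `T`; consequently `g` is killed by every
homomorphism from `H` to an elementary abelian `p`-group. -/
theorem stmt5 (p : ℕ) (hp : p.Prime)
    (H : Type) [Group H]
    (T : Subgroup H) [T.Normal]
    (habelian : ∀ a ∈ T, ∀ b ∈ T, a * b = b * a)
    (r : ℕ) (hr : 1 ≤ r) (eT : T ≃* (Fin r → Circle))
    (k : ℕ) (hHT : Nat.card (H ⧸ T) = p ^ k) :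
    ∃ g ∈ T, orderOf g = p ∧ g ∈ Subgroup.center H ∧
      (∃ x ∈ T, x ^ p = g) ∧
      (∀ (E : Type) (_ : CommGroup E),
        (∀ a : E, a ^ p = 1) → ∀ f : H →* E, f g = 1) := by
  have : Fact p.Prime := ⟨hp⟩
  have : Finite (T.torsionBy habelian p) := Subgroup.finite_torsionBy_of_mulEquiv eT
    (Pi.finite_setOf_pow_eq_one (Circle.finite_setOf_pow_eq_one hp.ne_zero))
  obtain ⟨z, hzp, hz1⟩ := Circle.exists_pow_eq_one_ne_one hp.one_lt
  have htors : ∃ t ∈ T, t ^ p = 1 ∧ t ≠ 1 :=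
    Subgroup.exists_mem_pow_eq_one_ne_one_of_mulEquiv eT (a := fun _ => z) (funext fun _ => hzp)
      fun h => hz1 (congrFun h ⟨0, hr⟩)
  obtain ⟨g, hgT, hg, hgZ, x, hxT, rfl⟩ :=
    Subgroup.exists_orderOf_eq_mem_center_of_divisible T habelian (IsPGroup.of_card hHT) htors
      fun _ => Subgroup.exists_mem_pow_eq_of_mulEquiv eT
        (Pi.exists_pow_eq (Circle.exists_pow_eq hp.ne_zero))
  exact ⟨_, hgT, hg, hgZ, ⟨x, hxT, rfl⟩, fun E _ hE f => by rw [map_pow, hE]⟩
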